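/- Fix t > r ≥ 0 with u := t - r > 1, and let D_{tr} = { (ρ,s) ∈ [0,∞)^2 : -(t+r) ≤ s-ρ ≤ t-r, t-r ≤ s+ρ ≤ t+r }. For a dyadic number R with R < u/8, let D_{tr}^R = D_{tr} ∩ {R < ρ < 2R} (and ρ < 2 for R = 1). Then, with v_+ := ⟨s+ρ⟩, one has ‖v_+^{-1}‖_{L^2(D_{tr}^{R})} ≲ 1 uniformly in R, t, r; summing, ‖v_+^{-1}‖_{L^2(D_{tr} ∩ {ρ < u/8})} ≲ (log(2+u))^{1/2}. -/

import Mathlib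

open MeasureTheory Real Set

noncomputable section

def jap (s : ℝ) : ℝ := Real.sqrt (1 + s ^ 2)

/-- The backward light cone with apex `(t,r)`, in the `(ρ, s)` plane. -/
def Dtr (t r : ℝ) : Set (ℝ × ℝ) :=
  {p | 0 ≤ p.1 ∧ 0 ≤ p.2 ∧ -(t + r) ≤ p.2 - p.1 ∧ p.2 - p.1 ≤ t - r ∧
    |t - r| ≤ p.2 + p.1 ∧ p.2 + p.1 ≤ t + r}

/-!
On the cone, `s + ρ ≥ t - r =: u`, so `⟨s + ρ⟩⁻² ≤ u⁻²`, while the part of the cone with `ρ < b`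
lies in the rectangle `[0, b] × [u - b, u + b]` of area `2b²`. Hence the integral over it is at
most `2b²/u²`, which is bounded as soon as `b ≲ u`: on every dyadic piece, and even on all of
`{ρ < u/8}`, so the logarithm in the last bound only needs `log (2 + u) ≥ log 2`.
-/

theorem jap_inv_sq_le_of_le {u x : ℝ} (hu : 0 < u) (hx : u ≤ x) : (jap x)⁻¹ ^ 2 ≤ (u ^ 2)⁻¹ := by
  rw [jap, inv_pow, Real.sq_sqrt (by positivity)]
  exact inv_anti₀ (by positivity) (by nlinarith)

theorem sub_le_add_of_mem_Dtr {t r : ℝ} {p : ℝ × ℝ} (hp : p ∈ Dtr t r) : t - r ≤ p.2 + p.1 :=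
  (le_abs_self _).trans hp.2.2.2.2.1

theorem Dtr_inter_fst_lt_subset (t r b : ℝ) :
    Dtr t r ∩ {p | p.1 < b} ⊆ Icc 0 b ×ˢ Icc (t - r - b) (t - r + b) := by
  rintro ⟨ρ, s⟩ ⟨hp, hρb : ρ < b⟩
  have hlow : t - r ≤ s + ρ := sub_le_add_of_mem_Dtr hp
  obtain ⟨hρ, -, -, hdiff, -⟩ := hp
  exact ⟨⟨hρ, hρb.le⟩, by linarith, by linarith⟩

theorem volume_real_Icc_prod_Icc {a b c d : ℝ} (hab : a ≤ b) (hcd : c ≤ d) :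
    volume.real (Icc a b ×ˢ Icc c d) = (b - a) * (d - c) := by
  rw [Measure.volume_eq_prod, measureReal_prod_prod, Real.volume_real_Icc_of_le hab,
    Real.volume_real_Icc_of_le hcd]

theorem setIntegral_jap_inv_sq_le {t r b : ℝ} (hu : 0 < t - r) (hb : 0 ≤ b) {S : Set (ℝ × ℝ)}
    (hS : S ⊆ Dtr t r ∩ {p | p.1 < b}) :
    ∫ p in S, (jap (p.2 + p.1))⁻¹ ^ 2 ≤ 2 * b ^ 2 / (t - r) ^ 2 := by
  have hrect := hS.trans (Dtr_inter_fst_lt_subset t r b)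
  have hrect_fin : volume (Icc 0 b ×ˢ Icc (t - r - b) (t - r + b)) < ⊤ :=
    (isCompact_Icc.prod isCompact_Icc).measure_lt_top
  have hfin : volume S < ⊤ := (measure_mono hrect).trans_lt hrect_fin
  have hbound : ∀ p ∈ S, ‖(jap (p.2 + p.1))⁻¹ ^ 2‖ ≤ ((t - r) ^ 2)⁻¹ := fun p hp => by
    rw [Real.norm_of_nonneg (by positivity)]
    exact jap_inv_sq_le_of_le hu (sub_le_add_of_mem_Dtr (hS hp).1)
  calc ∫ p in S, (jap (p.2 + p.1))⁻¹ ^ 2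
      ≤ ((t - r) ^ 2)⁻¹ * volume.real S :=
        (Real.le_norm_self _).trans (norm_setIntegral_le_of_norm_le_const hfin hbound)
    _ ≤ ((t - r) ^ 2)⁻¹ * volume.real (Icc 0 b ×ˢ Icc (t - r - b) (t - r + b)) :=
        mul_le_mul_of_nonneg_left (measureReal_mono hrect hrect_fin.ne) (by positivity)
    _ = 2 * b ^ 2 / (t - r) ^ 2 := by
        rw [volume_real_Icc_prod_Icc hb (by linarith)]
        ring

/-- With `u = t - r > 1`: on each dyadic piece `D_{tr}^R = D_{tr} ∩ {R < ρ < 2R}`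
with `R < u/8` (and `{ρ < 2}` for `R = 1`), the `L²` norm of `⟨s+ρ⟩⁻¹` is uniformly
bounded; summing over `ρ < u/8` gives the bound `(log(2+u))^{1/2}`. -/
theorem stmt5 :
    ∃ C : ℝ, 0 < C ∧ ∀ t r : ℝ, 0 ≤ r → 1 < t - r →
      (∀ R : ℝ, 1 ≤ R → R < (t - r) / 8 →
        Real.sqrt (∫ p in Dtr t r ∩ {p : ℝ × ℝ | R < p.1 ∧ p.1 < 2 * R},
            ((jap (p.2 + p.1))⁻¹) ^ 2) ≤ C) ∧
      Real.sqrt (∫ p in Dtr t r ∩ {p : ℝ × ℝ | p.1 < 2},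
          ((jap (p.2 + p.1))⁻¹) ^ 2) ≤ C ∧
      Real.sqrt (∫ p in Dtr t r ∩ {p : ℝ × ℝ | p.1 < (t - r) / 8},
          ((jap (p.2 + p.1))⁻¹) ^ 2)
        ≤ C * Real.sqrt (Real.log (2 + (t - r))) := by
  refine ⟨3, by norm_num, fun t r _ hu => ?_⟩
  have hu0 : 0 < t - r := by linarith
  refine ⟨fun R hR hRu => ?_, ?_, ?_⟩
  · have h := setIntegral_jap_inv_sq_le hu0 (by linarith : (0 : ℝ) ≤ 2 * R)
      (inter_subset_inter_right _ fun p (hp : R < p.1 ∧ p.1 < 2 * R) => hp.2)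
    refine Real.sqrt_le_iff.2 ⟨by norm_num, h.trans ?_⟩
    rw [div_le_iff₀ (by positivity)]
    nlinarith
  · have h := setIntegral_jap_inv_sq_le hu0 zero_le_two subset_rfl
    refine Real.sqrt_le_iff.2 ⟨by norm_num, h.trans ?_⟩
    rw [div_le_iff₀ (by positivity)]
    nlinarith
  · have h := setIntegral_jap_inv_sq_le hu0 (by linarith : (0 : ℝ) ≤ (t - r) / 8) subset_rfl
    have hlog : log 2 ≤ log (2 + (t - r)) := log_le_log two_pos (by linarith)
    rw [← Real.sqrt_sq (by norm_num : (0 : ℝ) ≤ 3), ← Real.sqrt_mul (by norm_num)]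
    refine Real.sqrt_le_sqrt (h.trans ?_)
    rw [div_le_iff₀ (by positivity)]
    nlinarith [Real.log_two_gt_d9]
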